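/- arXiv:2203.01887 — 8 statements merged into one kernel-verified Lean document; each statement's English description precedes it below -/
import Mathlib

section
/- Let V be a 4-dimensional real inner product space with a compatible complex structure J, and let W be the space of trilinear forms α with α(x,y,z) = −α(x,z,y) = −α(x,Jy,Jz). Then any α ∈ W that is also fully antisymmetric in the sense α(x,y,z) = −α(y,x,z) for all x,y,z vanishes identically; i.e., the Gray–Hervella class W₁ is trivial in dimension 4. -/
/-- Membership in the Gray–Hervella space `W`. -/
def GrayHervella.memW {V : Type*} [NormedAddCommGroup V] [InnerProductSpace ℝ V]
    (J : V →ₗ[ℝ] V) (α : V →ₗ[ℝ] V →ₗ[ℝ] V →ₗ[ℝ] ℝ) : Prop :=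
  ∀ x y z : V, α x y z = - α x z y ∧ α x y z = - α x (J y) (J z)

/-!
Since `α` is alternating and anti-invariant under `J` in its last two slots, the functional
`α x y` vanishes on `x, J x, y, J y`, and `α x` vanishes on `x, J x`. If `y` lies in the complex
line `span {x, J x}`, the second fact gives `α x y = 0`. Otherwise, because `J² = -1` has no real
eigenvalues, the two complex lines through `x` and `y` meet trivially, so together they span the
whole 4-dimensional space and the first fact gives `α x y = 0`.
-/

namespace GrayHervella

open Module Submodule

variable {V : Type*} [AddCommGroup V] [Module ℝ V] {J : V →ₗ[ℝ] V}

def complexLine (J : V →ₗ[ℝ] V) (y : V) : Submodule ℝ V := span ℝ {y, J y}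

theorem complexLine_le_comap (hJ2 : ∀ v, J (J v) = -v) (x : V) :
    complexLine J x ≤ (complexLine J x).comap J := by
  rw [complexLine, span_le, Set.insert_subset_iff, Set.singleton_subset_iff]
  constructor
  · exact subset_span (by simp)
  · simpa [hJ2] using subset_span (s := {x, J x}) (by simp)

theorem eq_zero_of_smul_add_smul_apply_mem (hJ2 : ∀ v, J (J v) = -v) {P : Submodule ℝ V}
    (hP : P ≤ P.comap J) {y : V} (hy : y ∉ P) {a b : ℝ} (h : a • y + b • J y ∈ P) :
    a = 0 ∧ b = 0 := by
  have hJ : a • J y - b • y ∈ P := by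
    simpa [hJ2, sub_eq_add_neg] using hP h
  -- `a (a y + b J y) - b (a J y - b y) = (a² + b²) y`
  have hsq : (a ^ 2 + b ^ 2) • y ∈ P := by
    convert P.sub_mem (P.smul_mem a h) (P.smul_mem b hJ) using 1
    module
  have hzero : a ^ 2 + b ^ 2 = 0 := by
    by_contra hne
    exact hy ((P.smul_mem_iff hne).mp hsq)
  constructor <;> nlinarith [sq_nonneg a, sq_nonneg b]

theorem disjoint_complexLine (hJ2 : ∀ v, J (J v) = -v) {P : Submodule ℝ V}
    (hP : P ≤ P.comap J) {y : V} (hy : y ∉ P) : Disjoint P (complexLine J y) := by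
  rw [disjoint_def]
  intro v hvP hv
  obtain ⟨a, b, rfl⟩ := mem_span_pair.mp hv
  obtain ⟨rfl, rfl⟩ := eq_zero_of_smul_add_smul_apply_mem hJ2 hP hy hvP
  simp

theorem finrank_sup_complexLine [FiniteDimensional ℝ V] (hJ2 : ∀ v, J (J v) = -v)
    {P : Submodule ℝ V} (hP : P ≤ P.comap J) {y : V} (hy : y ∉ P) :
    finrank ℝ ↥(P ⊔ complexLine J y) = finrank ℝ P + 2 := by
  have hy0 : y ∉ (⊥ : Submodule ℝ V) := by
    rintro h0
    rw [mem_bot] at h0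
    exact hy (h0 ▸ P.zero_mem)
  have hindep : LinearIndependent ℝ ![y, J y] :=
    LinearIndependent.pair_iff.mpr fun a b h =>
      eq_zero_of_smul_add_smul_apply_mem hJ2 bot_le hy0 (by simpa using h)
  have hline : finrank ℝ (complexLine J y) = 2 := by
    have := finrank_span_eq_card hindep
    rwa [Matrix.range_cons_cons_empty, Fintype.card_fin] at this
  have := finrank_sup_add_finrank_inf_eq P (complexLine J y)
  rwa [(disjoint_complexLine hJ2 hP hy).eq_bot, finrank_bot, add_zero, hline] at this

theorem complexLine_sup_complexLine_eq_top [FiniteDimensional ℝ V]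
    (hJ2 : ∀ v, J (J v) = -v) (hdim : finrank ℝ V = 4) {x y : V} (hx : x ≠ 0)
    (hy : y ∉ complexLine J x) : complexLine J x ⊔ complexLine J y = ⊤ := by
  have hline : finrank ℝ (complexLine J x) = 2 := by
    have := finrank_sup_complexLine hJ2 (P := ⊥) bot_le (y := x) (by simpa using hx)
    rwa [bot_sup_eq, finrank_bot, zero_add] at this
  apply eq_top_of_finrank_eq
  rw [finrank_sup_complexLine hJ2 (complexLine_le_comap hJ2 x) hy, hline, hdim]

variable {α : V →ₗ[ℝ] V →ₗ[ℝ] V →ₗ[ℝ] ℝ}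

theorem complexLine_le_ker (hJ2 : ∀ v, J (J v) = -v)
    (h12 : ∀ x y z, α x y z = -α y x z) (hJ : ∀ x y z, α x y z = -α x (J y) (J z)) (x : V) :
    complexLine J x ≤ LinearMap.ker (α x) := by
  have hxx : ∀ z, α x x z = 0 := fun z => by linarith [h12 x x z]
  rw [complexLine, span_le, Set.insert_subset_iff, Set.singleton_subset_iff]
  constructor <;> ext z
  · exact hxx z
  · simpa [hJ2, hxx] using hJ x (J x) z

theorem complexLine_sup_complexLine_le_ker (hJ2 : ∀ v, J (J v) = -v)
    (h12 : ∀ x y z, α x y z = -α y x z) (h23 : ∀ x y z, α x y z = -α x z y)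
    (hJ : ∀ x y z, α x y z = -α x (J y) (J z)) (x y : V) :
    complexLine J x ⊔ complexLine J y ≤ LinearMap.ker (α x y) := by
  refine sup_le (fun w hw => ?_) ?_
  · rw [LinearMap.mem_ker, h23, complexLine_le_ker hJ2 h12 hJ x hw]
    simp
  · rw [complexLine, span_le, Set.insert_subset_iff, Set.singleton_subset_iff]
    constructor
    · show α x y y = 0
      linarith [h23 x y y]
    · show α x y (J y) = 0
      have := hJ x y (J y)
      simp only [hJ2, map_neg, neg_neg] at this
      linarith [h23 x (J y) y]

end GrayHervella

open GrayHervella Submodule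

theorem W1_trivial_dim_four_general
    {V : Type*} [NormedAddCommGroup V] [InnerProductSpace ℝ V] [FiniteDimensional ℝ V]
    (hdim : Module.finrank ℝ V = 4)
    (J : V →ₗ[ℝ] V) (hJ2 : ∀ x : V, J (J x) = -x)
    (α : V →ₗ[ℝ] V →ₗ[ℝ] V →ₗ[ℝ] ℝ) (hα : GrayHervella.memW J α)
    (hanti : ∀ x y z : V, α x y z = - α y x z) :
    α = 0 := by
  have h23 x y z := (hα x y z).1
  have hJ x y z := (hα x y z).2
  ext x y z
  rcases eq_or_ne x 0 with rfl | hx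
  · simp
  by_cases hy : y ∈ complexLine J x
  · simp [LinearMap.mem_ker.mp (complexLine_le_ker hJ2 hanti hJ x hy)]
  · apply complexLine_sup_complexLine_le_ker hJ2 hanti h23 hJ x y
    rw [complexLine_sup_complexLine_eq_top hJ2 hdim hx hy]
    exact mem_top

/-- On a 4-dimensional real inner product space with compatible complex
structure `J`, any `α ∈ W` which is antisymmetric in its first two arguments vanishes
identically; i.e. the Gray–Hervella class `W₁` is trivial in dimension 4. -/
theorem W1_trivial_dim_four
    {V : Type*} [NormedAddCommGroup V] [InnerProductSpace ℝ V] [FiniteDimensional ℝ V]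
    (hdim : Module.finrank ℝ V = 4)
    (J : V →ₗ[ℝ] V) (hJ2 : ∀ x : V, J (J x) = -x)
    (hJinner : ∀ x y : V, (inner ℝ (J x) (J y) : ℝ) = inner ℝ x y)
    (α : V →ₗ[ℝ] V →ₗ[ℝ] V →ₗ[ℝ] ℝ) (hα : GrayHervella.memW J α)
    (hanti : ∀ x y z : V, α x y z = - α y x z) :
    α = 0 :=
  W1_trivial_dim_four_general hdim J hJ2 α hα hanti
end

section
/- Let V be a 4-dimensional real inner product space with compatible complex structure J, and let W be the space of trilinear forms α with α(x,y,z) = −α(x,z,y) = −α(x,Jy,Jz). If α ∈ W satisfies α(x,y,z) = α(Jx,Jy,z) for all x,y,z and its trace form ᾱ(z) = Σᵢ α(eᵢ,eᵢ,z) vanishes for every z (with {eᵢ} an orthonormal basis), then α = 0; i.e., the Gray–Hervella class W₃ is trivial in dimension 4. -/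
open scoped InnerProductSpace

section

variable {V : Type*} [NormedAddCommGroup V] [InnerProductSpace ℝ V]

theorem OrthonormalBasis.sum_apply_self_eq {M ι ι' : Type*} [AddCommGroup M] [Module ℝ M]
    [Fintype ι] [Fintype ι'] (β : V →ₗ[ℝ] V →ₗ[ℝ] M) (b : OrthonormalBasis ι ℝ V)
    (b' : OrthonormalBasis ι' ℝ V) :
    ∑ i, β (b i) (b i) = ∑ j, β (b' j) (b' j) := by
  classical
  have expand (x : V) :
      β x x = ∑ j, ∑ k, (⟪b' j, x⟫_ℝ * ⟪x, b' k⟫_ℝ) • β (b' j) (b' k) := by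
    conv_lhs => rw [← b'.sum_repr' x]
    simp only [map_sum, map_smul, LinearMap.sum_apply, LinearMap.smul_apply, Finset.smul_sum,
      smul_smul, real_inner_comm x]
    rw [Finset.sum_comm]
    exact Finset.sum_congr rfl fun j _ => Finset.sum_congr rfl fun k _ => by rw [mul_comm]
  calc ∑ i, β (b i) (b i)
      = ∑ j, ∑ k, ⟪b' j, b' k⟫_ℝ • β (b' j) (b' k) := by
        simp_rw [expand, ← b.sum_inner_mul_inner (b' _) (b' _), Finset.sum_smul]
        rw [Finset.sum_comm]
        exact Finset.sum_congr rfl fun j _ => Finset.sum_comm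
    _ = ∑ j, β (b' j) (b' j) := by
        simp [orthonormal_iff_ite.mp b'.orthonormal]

theorem exists_norm_eq_one_forall_inner_eq_zero (s : Finset V)
    (hs : s.card < Module.finrank ℝ V) : ∃ w : V, ‖w‖ = 1 ∧ ∀ v ∈ s, ⟪v, w⟫_ℝ = 0 := by
  have hK : Submodule.span ℝ (s : Set V) ≠ ⊤ := fun h => by
    have := finrank_span_finset_le_card (R := ℝ) s
    rw [Set.finrank, h, finrank_top] at this
    omega
  obtain ⟨w, hwK, hw0⟩ := Submodule.ne_bot_iff _ |>.mp (mt Submodule.orthogonal_eq_bot_iff.mp hK)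
  refine ⟨‖w‖⁻¹ • w, by simp [norm_smul, hw0], fun v hv => ?_⟩
  rw [real_inner_smul_right, (Submodule.mem_orthogonal _ _).mp hwK v (Submodule.subset_span hv),
    mul_zero]

namespace CompatibleComplexStructure

variable {J : V →ₗ[ℝ] V} (hJinner : ∀ x y, ⟪J x, J y⟫_ℝ = ⟪x, y⟫_ℝ)
include hJinner

theorem norm_apply (x : V) : ‖J x‖ = ‖x‖ := by
  rw [norm_eq_sqrt_real_inner, norm_eq_sqrt_real_inner, hJinner]

variable (hJ2 : ∀ x, J (J x) = -x)
include hJ2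

theorem inner_apply_left (x y : V) : ⟪J x, y⟫_ℝ = -⟪x, J y⟫_ℝ := by
  rw [← hJinner x (J y), hJ2, inner_neg_right, neg_neg]

theorem inner_apply_self (x : V) : ⟪J x, x⟫_ℝ = 0 := by
  have h := inner_apply_left hJinner hJ2 x x
  rw [real_inner_comm (J x) x] at h
  linarith

theorem orthonormal_unitaryFrame {u w : V} (hu : ‖u‖ = 1) (hw : ‖w‖ = 1) (huw : ⟪u, w⟫_ℝ = 0)
    (hJuw : ⟪J u, w⟫_ℝ = 0) : Orthonormal ℝ ![u, J u, w, J w] := by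
  have huJw : ⟪u, J w⟫_ℝ = 0 := by
    rw [← neg_eq_zero, ← inner_apply_left hJinner hJ2, hJuw]
  have hJuJw : ⟪J u, J w⟫_ℝ = 0 := by rw [hJinner, huw]
  have hJxx := inner_apply_self hJinner hJ2
  have hxJx (x : V) : ⟪x, J x⟫_ℝ = 0 := by rw [real_inner_comm, hJxx]
  rw [orthonormal_iff_ite]
  intro i j
  fin_cases i <;> fin_cases j <;>
    simp [norm_apply hJinner, hu, hw, huw, hJuw, huJw, hJuJw, hJxx, hxJx,
      real_inner_comm u, real_inner_comm (J u)]

theorem exists_orthonormalBasis_unitaryFrame (hV : Module.finrank ℝ V = 4) {u : V}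
    (hu : ‖u‖ = 1) : ∃ (w : V) (g : OrthonormalBasis (Fin 4) ℝ V), ⇑g = ![u, J u, w, J w] := by
  classical
  obtain ⟨w, hw, hperp⟩ := exists_norm_eq_one_forall_inner_eq_zero {u, J u}
    (Finset.card_le_two.trans_lt (by omega))
  have hon := orthonormal_unitaryFrame hJinner hJ2 hu hw (hperp u (by simp))
    (hperp (J u) (by simp))
  exact ⟨w, .mk hon (hon.linearIndependent.span_eq_top_of_card_eq_finrank (by simp [hV])).ge,
    OrthonormalBasis.coe_mk _ _⟩

end CompatibleComplexStructure

namespace GrayHervella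

variable {J : V →ₗ[ℝ] V} {α : V →ₗ[ℝ] V →ₗ[ℝ] V →ₗ[ℝ] ℝ}

theorem memW.apply_self_right (hα : memW J α) (x y : V) : α x y y = 0 := by
  linarith [(hα x y y).1]

theorem memW.apply_apply_map_self (hα : memW J α) (hJ2 : ∀ x, J (J x) = -x) (x y : V) :
    α x y (J y) = 0 := by
  have h := (hα x y (J y)).2
  rw [hJ2, map_neg, (hα x (J y) y).1, neg_neg] at h
  linarith

theorem memW.apply_self_eq_zero_of_norm_eq_one (hα : memW J α)
    (hJinner : ∀ x y, ⟪J x, J y⟫_ℝ = ⟪x, y⟫_ℝ) (hJ2 : ∀ x, J (J x) = -x)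
    (hJJ : ∀ x y z, α x y z = α (J x) (J y) z) (hV : Module.finrank ℝ V = 4)
    {ι : Type*} [Fintype ι] (b : OrthonormalBasis ι ℝ V) (htrace : ∑ i, α (b i) (b i) = 0)
    {u : V} (hu : ‖u‖ = 1) : α u u = 0 := by
  obtain ⟨w, g, hg⟩ :=
    CompatibleComplexStructure.exists_orthonormalBasis_unitaryFrame hJinner hJ2 hV hu
  have hJJ' (x : V) : α (J x) (J x) = α x x := LinearMap.ext fun z => (hJJ x x z).symm
  have huw : α u u = -α w w := by
    rw [b.sum_apply_self_eq α g, Fin.sum_univ_four, hg] at htrace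
    simp only [Matrix.cons_val, hJJ'] at htrace
    linear_combination (norm := module) (2⁻¹ : ℝ) • htrace
  refine g.toBasis.ext fun i => ?_
  fin_cases i
  · simp [hg, hα.apply_self_right]
  · simp [hg, hα.apply_apply_map_self hJ2]
  · simp [hg, huw, hα.apply_self_right]
  · simp [hg, huw, hα.apply_apply_map_self hJ2]

theorem memW.isAlt (hα : memW J α) (hJinner : ∀ x y, ⟪J x, J y⟫_ℝ = ⟪x, y⟫_ℝ)
    (hJ2 : ∀ x, J (J x) = -x) (hJJ : ∀ x y z, α x y z = α (J x) (J y) z)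
    (hV : Module.finrank ℝ V = 4) {ι : Type*} [Fintype ι] (b : OrthonormalBasis ι ℝ V)
    (htrace : ∑ i, α (b i) (b i) = 0) : α.IsAlt := by
  intro x
  by_cases hx : x = 0
  · simp [hx]
  have hu := hα.apply_self_eq_zero_of_norm_eq_one hJinner hJ2 hJJ hV b htrace
    (norm_smul_inv_norm (𝕜 := ℝ) hx)
  simpa [hx] using hu

theorem memW.eq_zero_of_isAlt (hα : memW J α) (hJJ : ∀ x y z, α x y z = α (J x) (J y) z)
    (hAlt : α.IsAlt) : α = 0 := by
  have hswap (x y z : V) : α y x z = -α x y z := by rw [← hAlt.neg, LinearMap.neg_apply]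
  ext x y z
  have hJ : α (J x) (J y) z = -α x y z := calc
    α (J x) (J y) z = α z (J x) (J y) := by rw [(hα _ _ _).1, hswap, neg_neg]
    _ = -α z x y := by rw [(hα z x y).2, neg_neg]
    _ = -α x y z := by rw [hswap, (hα x z y).1, neg_neg]
  simp only [LinearMap.zero_apply]
  linarith [hJJ x y z]

end GrayHervella

end

theorem W3_trivial_dim_four_general
    {V : Type*} [NormedAddCommGroup V] [InnerProductSpace ℝ V]
    (b : OrthonormalBasis (Fin 4) ℝ V)
    (J : V →ₗ[ℝ] V) (hJ2 : ∀ x : V, J (J x) = -x)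
    (hJinner : ∀ x y : V, (inner ℝ (J x) (J y) : ℝ) = inner ℝ x y)
    (α : V →ₗ[ℝ] V →ₗ[ℝ] V →ₗ[ℝ] ℝ) (hα : GrayHervella.memW J α)
    (hJJ : ∀ x y z : V, α x y z = α (J x) (J y) z)
    (htrace : ∀ z : V, ∑ i : Fin 4, α (b i) (b i) z = 0) :
    α = 0 := by
  have hV : Module.finrank ℝ V = 4 := by simp [Module.finrank_eq_card_basis b.toBasis]
  have htrace' : ∑ i, α (b i) (b i) = 0 := LinearMap.ext fun z => by simpa using htrace z
  exact hα.eq_zero_of_isAlt hJJ (hα.isAlt hJinner hJ2 hJJ hV b htrace')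

/-- On a 4-dimensional real inner product space with compatible complex
structure `J`, if `α ∈ W` satisfies `α(x,y,z) = α(Jx,Jy,z)` and its trace form
`ᾱ(z) = Σᵢ α(eᵢ,eᵢ,z)` vanishes for every `z`, then `α = 0`; i.e. the Gray–Hervella
class `W₃` is trivial in dimension 4. -/
theorem W3_trivial_dim_four
    {V : Type*} [NormedAddCommGroup V] [InnerProductSpace ℝ V] [FiniteDimensional ℝ V]
    (b : OrthonormalBasis (Fin 4) ℝ V)
    (J : V →ₗ[ℝ] V) (hJ2 : ∀ x : V, J (J x) = -x)
    (hJinner : ∀ x y : V, (inner ℝ (J x) (J y) : ℝ) = inner ℝ x y)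
    (α : V →ₗ[ℝ] V →ₗ[ℝ] V →ₗ[ℝ] ℝ) (hα : GrayHervella.memW J α)
    (hJJ : ∀ x y z : V, α x y z = α (J x) (J y) z)
    (htrace : ∀ z : V, ∑ i : Fin 4, α (b i) (b i) z = 0) :
    α = 0 :=
  W3_trivial_dim_four_general b J hJ2 hJinner α hα hJJ htrace
end

section
/- Let V be a real inner product space with compatible complex structure J and let W be the space of trilinear forms α with α(x,y,z) = −α(x,z,y) = −α(x,Jy,Jz). If α ∈ W satisfies the cyclic condition α(x,y,z) + α(z,x,y) + α(y,z,x) = 0 for all x,y,z, then α(x,y,z) = −α(Jx,Jy,z) for all x,y,z ∈ V. -/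
/-!
Put `β(x,y,z) = α(x,y,z) + α(Jx,Jy,z)`. Adding the cyclic identity at `(x,y,z)` and at
`(Jx,Jy,z)`, and moving `J` between the last two slots of `α`, gives `β(x,y,z) = -β(y,z,x)`.
Three cyclic shifts then give `β = -β`, so `β = 0`.
-/

namespace GrayHervella

variable {R M : Type*} [CommRing R] [AddCommGroup M] [Module R M]
  {J : M →ₗ[R] M} {α : M →ₗ[R] M →ₗ[R] M →ₗ[R] R}

theorem apply_apply_J_eq (hJ2 : ∀ x, J (J x) = -x)
    (hαJ : ∀ x y z, α x y z = -α x (J y) (J z)) (x y z : M) :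
    α x (J y) z = α x y (J z) := by
  have h := hαJ x y (J z)
  rw [hJ2, map_neg, neg_neg] at h
  exact h.symm

theorem add_apply_J_J_eq_neg_cyclic (hJ2 : ∀ x, J (J x) = -x)
    (hαJ : ∀ x y z, α x y z = -α x (J y) (J z))
    (hcyc : ∀ x y z, α x y z + α z x y + α y z x = 0) (x y z : M) :
    α x y z + α (J x) (J y) z = -(α y z x + α (J y) (J z) x) := by
  linear_combination hcyc x y z + hcyc (J x) (J y) z - hαJ z x y
    + apply_apply_J_eq hJ2 hαJ (J y) z x

theorem eq_neg_apply_J_J [IsAddTorsionFree R] (hJ2 : ∀ x, J (J x) = -x)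
    (hαJ : ∀ x y z, α x y z = -α x (J y) (J z))
    (hcyc : ∀ x y z, α x y z + α z x y + α y z x = 0) (x y z : M) :
    α x y z = -α (J x) (J y) z := by
  have hβ := add_apply_J_J_eq_neg_cyclic hJ2 hαJ hcyc
  have hβ_self : α x y z + α (J x) (J y) z = -(α x y z + α (J x) (J y) z) :=
    calc _ = -(α y z x + α (J y) (J z) x) := hβ x y z
      _ = α z x y + α (J z) (J x) y := by rw [hβ y z x, neg_neg]
      _ = _ := hβ z x y
  exact eq_neg_of_add_eq_zero_left (self_eq_neg.mp hβ_self)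

end GrayHervella

theorem W2_implies_Jskew_general
    {V : Type*} [NormedAddCommGroup V] [InnerProductSpace ℝ V]
    (J : V →ₗ[ℝ] V) (hJ2 : ∀ x : V, J (J x) = -x)
    (α : V →ₗ[ℝ] V →ₗ[ℝ] V →ₗ[ℝ] ℝ) (hα : GrayHervella.memW J α)
    (hcyc : ∀ x y z : V, α x y z + α z x y + α y z x = 0) :
    ∀ x y z : V, α x y z = - α (J x) (J y) z :=
  GrayHervella.eq_neg_apply_J_J hJ2 (fun x y z => (hα x y z).2) hcyc

/-- If `α ∈ W` satisfies the cyclic condition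
`α(x,y,z) + α(z,x,y) + α(y,z,x) = 0`, then `α(x,y,z) = −α(Jx,Jy,z)`. -/
theorem W2_implies_Jskew
    {V : Type*} [NormedAddCommGroup V] [InnerProductSpace ℝ V]
    (J : V →ₗ[ℝ] V) (hJ2 : ∀ x : V, J (J x) = -x)
    (hJinner : ∀ x y : V, (inner ℝ (J x) (J y) : ℝ) = inner ℝ x y)
    (α : V →ₗ[ℝ] V →ₗ[ℝ] V →ₗ[ℝ] ℝ) (hα : GrayHervella.memW J α)
    (hcyc : ∀ x y z : V, α x y z + α z x y + α y z x = 0) :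
    ∀ x y z : V, α x y z = - α (J x) (J y) z :=
  W2_implies_Jskew_general J hJ2 α hα hcyc
end

section
/- Let V be a real inner product space with compatible complex structure J and W the space of trilinear forms α with α(x,y,z) = −α(x,z,y) = −α(x,Jy,Jz). If α ∈ W is antisymmetric in the first two arguments, α(x,y,z) = −α(y,x,z), then α is totally cyclic-symmetric: α(x,y,z) = α(z,x,y) = α(y,z,x), and moreover α(x,y,z) = −α(Jx,Jy,z) for all x,y,z. -/
namespace GrayHervella

variable {X G : Type*} [InvolutiveNeg G]

theorem cyclic_of_antisymm {f : X → X → X → G}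
    (h₁₂ : ∀ x y z, f x y z = -f y x z) (h₂₃ : ∀ x y z, f x y z = -f x z y) (x y z : X) :
    f x y z = f y z x := by
  rw [h₁₂, h₂₃, neg_neg]

theorem neg_apply_apply_of_cyclic {f : X → X → X → G} {g : X → X}
    (hcyc : ∀ x y z, f x y z = f y z x) (hg : ∀ x y z, f x y z = -f x (g y) (g z))
    (x y z : X) : f x y z = -f (g x) (g y) z := by
  rw [← hcyc z, hg, hcyc]

end GrayHervella

theorem W1_cyclic_and_Jskew_general
    {V : Type*} [NormedAddCommGroup V] [InnerProductSpace ℝ V]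
    (J : V →ₗ[ℝ] V)
    (α : V →ₗ[ℝ] V →ₗ[ℝ] V →ₗ[ℝ] ℝ) (hα : GrayHervella.memW J α)
    (hanti : ∀ x y z : V, α x y z = - α y x z) :
    ∀ x y z : V, α x y z = α z x y ∧ α x y z = α y z x ∧
      α x y z = - α (J x) (J y) z := by
  have hcyc := GrayHervella.cyclic_of_antisymm (f := fun x y z => α x y z) hanti
    (fun x y z => (hα x y z).1)
  intro x y z
  exact ⟨(hcyc z x y).symm, hcyc x y z,
    GrayHervella.neg_apply_apply_of_cyclic (f := fun x y z => α x y z) hcyc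
      (fun x y z => (hα x y z).2) x y z⟩

/-- If `α ∈ W` is antisymmetric in its first two arguments, then `α` is
totally cyclic-symmetric, `α(x,y,z) = α(z,x,y) = α(y,z,x)`, and moreover
`α(x,y,z) = −α(Jx,Jy,z)`. -/
theorem W1_cyclic_and_Jskew
    {V : Type*} [NormedAddCommGroup V] [InnerProductSpace ℝ V]
    (J : V →ₗ[ℝ] V) (hJ2 : ∀ x : V, J (J x) = -x)
    (hJinner : ∀ x y : V, (inner ℝ (J x) (J y) : ℝ) = inner ℝ x y)
    (α : V →ₗ[ℝ] V →ₗ[ℝ] V →ₗ[ℝ] ℝ) (hα : GrayHervella.memW J α)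
    (hanti : ∀ x y z : V, α x y z = - α y x z) :
    ∀ x y z : V, α x y z = α z x y ∧ α x y z = α y z x ∧
      α x y z = - α (J x) (J y) z :=
  W1_cyclic_and_Jskew_general J α hα hanti
end

section
/- Let 𝔤 be a 4-dimensional real Lie algebra with inner product, orthonormal basis {X,Y,Z,W}, and J with JX=Y, JY=−X, JZ=W, JW=−Z. Let N be the Nijenhuis tensor. If g(JW', N(V,U)) + g(JV, N(U,W')) + g(JU, N(V,W')) = 0 for all U,V,W' ∈ 𝔤, then N = 0. -/
/-!
Since `J² = -1`, the Nijenhuis tensor is `J`-antilinear in its second slot, `N(U, JW) = -J N(U, W)`,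
and `J` is orthogonal (it permutes the orthonormal basis up to signs). Substituting `W' = JW` therefore
turns the hypothesis into the `J`-free identity `g(W, N(V,U)) + g(V, N(U,W)) + g(U, N(V,W)) = 0`.
Its last two terms are symmetric in `U, V`, so `g(W, N(V,U))` is symmetric in `U, V`; being also
antisymmetric, it vanishes for every `W`.
-/

section Nijenhuis

variable {R M : Type*} [CommRing R] [AddCommGroup M] [Module R M]

def nijenhuis (bracket : M →ₗ[R] M →ₗ[R] M) (J : M →ₗ[R] M) (u v : M) : M :=
  bracket u v + J (bracket (J u) v) + J (bracket u (J v)) - bracket (J u) (J v)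

theorem nijenhuis_swap {bracket : M →ₗ[R] M →ₗ[R] M} (hskew : ∀ u v, bracket u v = -bracket v u)
    (J : M →ₗ[R] M) (u v : M) : nijenhuis bracket J v u = -nijenhuis bracket J u v := by
  simp only [nijenhuis, hskew v u, hskew (J v) u, hskew v (J u), hskew (J v) (J u), map_neg]
  abel

theorem nijenhuis_apply_right (bracket : M →ₗ[R] M →ₗ[R] M) {J : M →ₗ[R] M}
    (hJ : ∀ u, J (J u) = -u) (u w : M) :
    nijenhuis bracket J u (J w) = -J (nijenhuis bracket J u w) := by
  simp only [nijenhuis, hJ, map_neg, map_add, map_sub]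
  abel

theorem apply_apply_eq_neg_of_basis_fin_four (b : Module.Basis (Fin 4) R M) {J : M →ₗ[R] M}
    (h0 : J (b 0) = b 1) (h1 : J (b 1) = -b 0) (h2 : J (b 2) = b 3) (h3 : J (b 3) = -b 2)
    (u : M) : J (J u) = -u := by
  have hJJ : J ∘ₗ J = -LinearMap.id := b.ext fun i => by fin_cases i <;> simp [h0, h1, h2, h3]
  simpa using LinearMap.congr_fun hJJ u

end Nijenhuis

theorem inner_map_map_of_apply_eq_or_eq_neg {𝕜 E ι : Type*} [RCLike 𝕜] [NormedAddCommGroup E]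
    [InnerProductSpace 𝕜 E] [Fintype ι] (b : OrthonormalBasis ι 𝕜 E)
    {f : E →ₗ[𝕜] E} {σ : ι → ι} (hσ : Function.Injective σ)
    (hf : ∀ i, f (b i) = b (σ i) ∨ f (b i) = -b (σ i)) (u v : E) :
    inner 𝕜 (f u) (f v) = inner 𝕜 u v := by
  have hb : Orthonormal 𝕜 b.toBasis := by simp
  have hfb : Orthonormal 𝕜 (f ∘ b.toBasis) := by
    simpa [Function.comp_def] using (b.orthonormal.comp σ hσ).orthonormal_of_forall_eq_or_eq_neg hf
  exact (f.isometryOfOrthonormal hb hfb).inner_map_map u v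

theorem eq_zero_of_inner_cyclic_sum {E : Type*} [NormedAddCommGroup E] [InnerProductSpace ℝ E]
    {N : E → E → E} (hanti : ∀ u v, N v u = -N u v)
    (hcyc : ∀ u v w, inner ℝ w (N v u) + inner ℝ v (N u w) + inner ℝ u (N v w) = (0 : ℝ))
    (u v : E) : N u v = 0 := by
  refine ext_inner_left ℝ fun w => ?_
  have h₁ := hcyc u v w
  have h₂ := hcyc v u w
  rw [hanti u v, inner_neg_right] at h₁
  rw [inner_zero_right]
  linarith

theorem nijenhuis_vanishes_of_cyclic_condition_general
    {V : Type*} [NormedAddCommGroup V] [InnerProductSpace ℝ V]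
    (b : OrthonormalBasis (Fin 4) ℝ V)
    (X Y Z W : V) (hX : X = b 0) (hY : Y = b 1) (hZ : Z = b 2) (hW : W = b 3)
    (lb : V →ₗ[ℝ] V →ₗ[ℝ] V)
    (hskew : ∀ U U' : V, lb U U' = - lb U' U)
    (J : V →ₗ[ℝ] V)
    (hJX : J X = Y) (hJY : J Y = -X) (hJZ : J Z = W) (hJW : J W = -Z)
    (N : V → V → V)
    (hN : ∀ U U' : V,
      N U U' = lb U U' + J (lb (J U) U') + J (lb U (J U')) - lb (J U) (J U'))
    (hcyc : ∀ U V' W' : V,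
      (inner ℝ (J W') (N V' U) : ℝ) + inner ℝ (J V') (N U W') + inner ℝ (J U) (N V' W') = 0) :
    ∀ U U' : V, N U U' = 0 := by
  subst hX hY hZ hW
  obtain rfl : N = nijenhuis lb J := funext₂ hN
  have hJJ := apply_apply_eq_neg_of_basis_fin_four b.toBasis (by simpa using hJX)
    (by simpa using hJY) (by simpa using hJZ) (by simpa using hJW)
  have hJ_inner : ∀ u v, inner ℝ (J u) (J v) = (inner ℝ u v : ℝ) :=
    inner_map_map_of_apply_eq_or_eq_neg b (σ := ![1, 0, 3, 2]) (by decide) fun i => by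
      fin_cases i <;> simp [hJX, hJY, hJZ, hJW]
  refine eq_zero_of_inner_cyclic_sum (nijenhuis_swap hskew J) fun u v w => ?_
  have h := hcyc u v (J w)
  rw [hJJ, nijenhuis_apply_right lb hJJ, nijenhuis_apply_right lb hJJ, inner_neg_left,
    inner_neg_right, inner_neg_right, hJ_inner, hJ_inner] at h
  linarith

/-- On a 4-dimensional real Lie algebra with orthonormal basis `{X,Y,Z,W}`
and `J` given by `JX = Y, JY = −X, JZ = W, JW = −Z`, if the Nijenhuis tensor `N`
satisfies `g(JW', N(V,U)) + g(JV, N(U,W')) + g(JU, N(V,W')) = 0` for all `U, V, W'`,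
then `N = 0`. -/
theorem nijenhuis_vanishes_of_cyclic_condition
    {V : Type*} [NormedAddCommGroup V] [InnerProductSpace ℝ V] [FiniteDimensional ℝ V]
    (b : OrthonormalBasis (Fin 4) ℝ V)
    (X Y Z W : V) (hX : X = b 0) (hY : Y = b 1) (hZ : Z = b 2) (hW : W = b 3)
    (lb : V →ₗ[ℝ] V →ₗ[ℝ] V)
    (hskew : ∀ U U' : V, lb U U' = - lb U' U)
    (hjacobi : ∀ U U' U'' : V,
      lb (lb U U') U'' + lb (lb U' U'') U + lb (lb U'' U) U' = 0)
    (J : V →ₗ[ℝ] V)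
    (hJX : J X = Y) (hJY : J Y = -X) (hJZ : J Z = W) (hJW : J W = -Z)
    (N : V → V → V)
    (hN : ∀ U U' : V,
      N U U' = lb U U' + J (lb (J U) U') + J (lb U (J U')) - lb (J U) (J U'))
    (hcyc : ∀ U V' W' : V,
      (inner ℝ (J W') (N V' U) : ℝ) + inner ℝ (J V') (N U W') + inner ℝ (J U) (N V' W') = 0) :
    ∀ U U' : V, N U U' = 0 :=
  nijenhuis_vanishes_of_cyclic_condition_general b X Y Z W hX hY hZ hW lb hskew J hJX hJY hJZ hJW N
    hN hcyc
end

section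
/- Let 𝔤 be the 4-dimensional Lie algebra with orthonormal basis {X,Y,Z,W} and brackets [W,Z]=λW, [Z,X]=αX+βY+z₁Z+w₁W, [Z,Y]=−βX+αY+z₂Z+w₂W, [W,X]=aX+bY+z₃Z−z₁W, [W,Y]=−bX+aY+z₄Z−z₂W, [Y,X]=rX+θ₁Z+θ₂W, and let J satisfy JX=Y, JY=−X, JZ=W, JW=−Z. Then the Nijenhuis tensor satisfies N(Z,X) = (2z₁ − z₄ − w₂)Z + (2z₂ + z₃ + w₁)W; in particular N(Z,X) = 0 if and only if 2z₂ + z₃ + w₁ = 0 and 2z₁ − z₄ − w₂ = 0. -/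
/-- For the 4-dimensional Lie algebra normal form with orthonormal basis
`{X,Y,Z,W}`, the listed bracket relations and `J` with `JX=Y, JY=−X, JZ=W, JW=−Z`,
the Nijenhuis tensor satisfies `N(Z,X) = (2z₁−z₄−w₂)Z + (2z₂+z₃+w₁)W`; in particular
`N(Z,X) = 0` iff `2z₂+z₃+w₁ = 0` and `2z₁−z₄−w₂ = 0`. -/
theorem nijenhuis_ZX_formula
    {V : Type*} [NormedAddCommGroup V] [InnerProductSpace ℝ V] [FiniteDimensional ℝ V]
    (e : OrthonormalBasis (Fin 4) ℝ V)
    (X Y Z W : V) (hX : X = e 0) (hY : Y = e 1) (hZ : Z = e 2) (hW : W = e 3)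
    (lam alpha beta a b r z1 z2 z3 z4 w1 w2 th1 th2 : ℝ)
    (lb : V →ₗ[ℝ] V →ₗ[ℝ] V)
    (hskew : ∀ U U' : V, lb U U' = - lb U' U)
    (hWZ : lb W Z = lam • W)
    (hZX : lb Z X = alpha • X + beta • Y + z1 • Z + w1 • W)
    (hZY : lb Z Y = -beta • X + alpha • Y + z2 • Z + w2 • W)
    (hWX : lb W X = a • X + b • Y + z3 • Z + (-z1) • W)
    (hWY : lb W Y = -b • X + a • Y + z4 • Z + (-z2) • W)
    (hYX : lb Y X = r • X + th1 • Z + th2 • W)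
    (J : V →ₗ[ℝ] V)
    (hJX : J X = Y) (hJY : J Y = -X) (hJZ : J Z = W) (hJW : J W = -Z)
    (N : V → V → V)
    (hN : ∀ U U' : V,
      N U U' = lb U U' + J (lb (J U) U') + J (lb U (J U')) - lb (J U) (J U')) :
    N Z X = (2 * z1 - z4 - w2) • Z + (2 * z2 + z3 + w1) • W ∧
      (N Z X = 0 ↔ 2 * z2 + z3 + w1 = 0 ∧ 2 * z1 - z4 - w2 = 0) := by
  have key : N Z X = (2 * z1 - z4 - w2) • Z + (2 * z2 + z3 + w1) • W := by
    rw [hN, hJZ, hJX, hZX, hWX, hZY, hWY]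
    simp only [map_add, map_smul, map_neg, hJX, hJY, hJZ, hJW]
    module
  refine ⟨key, ?_⟩
  rw [key]
  have hon := orthonormal_iff_ite.mp e.orthonormal
  constructor
  · intro h
    have h2' := congrArg (fun v => (inner ℝ (e 3) v : ℝ)) h
    have h1' := congrArg (fun v => (inner ℝ (e 2) v : ℝ)) h
    simp only [hZ, hW, inner_add_right, inner_smul_right, inner_zero_right, hon] at h1' h2'
    simp +decide at h1' h2'
    exact ⟨h2', h1'⟩
  · rintro ⟨h1, h2⟩
    rw [h1, h2, zero_smul, zero_smul, add_zero]
end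

section
/- Let 𝔤 be the 4-dimensional Lie algebra with orthonormal basis {X,Y,Z,W}, brackets as in the minimal conformal foliation normal form ([W,Z]=λW, [Z,X]=αX+βY+z₁Z+w₁W, [Z,Y]=−βX+αY+z₂Z+w₂W, [W,X]=aX+bY+z₃Z−z₁W, [W,Y]=−bX+aY+z₄Z−z₂W, [Y,X]=rX+θ₁Z+θ₂W), J with JX=Y, JY=−X, JZ=W, JW=−Z, and Kähler form ω(U,V)=g(JU,V). Then dω(X,Y,Z) = −θ₂ − 2α, dω(X,Y,W) = θ₁ − 2a, dω(X,Z,W) = 0 and dω(Y,Z,W) = 0, where dω(U,V,T) = −g(J[U,V],T) − g(J[V,T],U) − g(J[T,U],V). Hence dω = 0 if and only if θ₁ = 2a and θ₂ = −2α. -/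
/-!
Skew-symmetry of the bracket makes `dω` an alternating trilinear form, so on a 4-dimensional
space it vanishes as soon as it vanishes on the four increasing basis triples. Its values there
are read off the bracket table, using `J` and orthonormality of `X, Y, Z, W`.
-/

open scoped RealInnerProductSpace

section Trilinear

variable {R M N : Type*} [CommRing R] [AddCommGroup M] [Module R M] [AddCommGroup N]
  [Module R N]

theorem LinearMap.apply_swap_of_apply_self_eq_zero (f : M →ₗ[R] M →ₗ[R] M →ₗ[R] N)
    (hself : ∀ x z, f x x z = 0) (x y z : M) : f x y z = -f y x z := by
  have h := hself (x + y) z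
  simp only [map_add, LinearMap.add_apply, hself, zero_add, add_zero] at h
  exact eq_neg_of_add_eq_zero_right h

theorem LinearMap.eq_zero_of_alternating_of_basis_fin_four
    (f : M →ₗ[R] M →ₗ[R] M →ₗ[R] N) (b : Module.Basis (Fin 4) R M)
    (hrot : ∀ x y z, f x y z = f y z x) (hself : ∀ x z, f x x z = 0)
    (h012 : f (b 0) (b 1) (b 2) = 0) (h013 : f (b 0) (b 1) (b 3) = 0)
    (h023 : f (b 0) (b 2) (b 3) = 0) (h123 : f (b 1) (b 2) (b 3) = 0) : f = 0 := by
  have hswap := f.apply_swap_of_apply_self_eq_zero hself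
  refine b.ext fun i => b.ext fun j => b.ext fun k => ?_
  simp only [LinearMap.zero_apply]
  fin_cases i <;> fin_cases j <;> fin_cases k <;>
    -- each basis triple repeats an index or is a rotation, possibly after a swap, of an
    -- increasing one
    first
    | exact hself _ _
    | assumption
    | (rw [hrot]; first | exact hself _ _ | assumption)
    | (rw [hrot, hrot]; first | exact hself _ _ | assumption)
    | (rw [hswap, neg_eq_zero]
       first | assumption | (rw [hrot]; assumption) | (rw [hrot, hrot]; assumption))

end Trilinear

section KahlerForm

variable {V : Type*} [NormedAddCommGroup V] [InnerProductSpace ℝ V]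

/-- `dω` for the Kähler form `ω(U, V) = ⟪J U, V⟫` of the metric Lie algebra `(V, lb)`. -/
noncomputable def dKahlerForm (lb : V →ₗ[ℝ] V →ₗ[ℝ] V) (J : V →ₗ[ℝ] V) :
    V →ₗ[ℝ] V →ₗ[ℝ] V →ₗ[ℝ] ℝ :=
  LinearMap.mk₂ ℝ
    (fun U U' => -innerₗ V (J (lb U U')) - (innerₗ V).flip U ∘ₗ J ∘ₗ lb U'
      - (innerₗ V).flip U' ∘ₗ J ∘ₗ lb.flip U)
    (by intros; ext; simp [inner_add_right]; ring)
    (by intros; ext; simp; ring)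
    (by intros; ext; simp [inner_add_right]; ring)
    (by intros; ext; simp; ring)

@[simp]
theorem dKahlerForm_apply (lb : V →ₗ[ℝ] V →ₗ[ℝ] V) (J : V →ₗ[ℝ] V) (U U' T : V) :
    dKahlerForm lb J U U' T = -⟪J (lb U U'), T⟫ - ⟪J (lb U' T), U⟫ - ⟪J (lb T U), U'⟫ :=
  rfl

theorem dKahlerForm_apply_rotate (lb : V →ₗ[ℝ] V →ₗ[ℝ] V) (J : V →ₗ[ℝ] V)
    (U U' T : V) :
    dKahlerForm lb J U U' T = dKahlerForm lb J U' T U := by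
  simp only [dKahlerForm_apply]
  ring

theorem dKahlerForm_apply_self_left {lb : V →ₗ[ℝ] V →ₗ[ℝ] V}
    (hskew : ∀ U U' : V, lb U U' = -lb U' U) (J : V →ₗ[ℝ] V) (U T : V) :
    dKahlerForm lb J U U T = 0 := by
  have hUU : lb U U = 0 := by
    have h := hskew U U
    rw [eq_neg_iff_add_eq_zero, ← two_smul ℝ] at h
    exact (smul_eq_zero.mp h).resolve_left two_ne_zero
  simp [hUU, hskew T U]

end KahlerForm

theorem domega_formulas_general
    {V : Type*} [NormedAddCommGroup V] [InnerProductSpace ℝ V]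
    (e : OrthonormalBasis (Fin 4) ℝ V)
    (X Y Z W : V) (hX : X = e 0) (hY : Y = e 1) (hZ : Z = e 2) (hW : W = e 3)
    (lam alpha beta a b r z1 z2 z3 z4 w1 w2 th1 th2 : ℝ)
    (lb : V →ₗ[ℝ] V →ₗ[ℝ] V)
    (hskew : ∀ U U' : V, lb U U' = - lb U' U)
    (hWZ : lb W Z = lam • W)
    (hZX : lb Z X = alpha • X + beta • Y + z1 • Z + w1 • W)
    (hZY : lb Z Y = -beta • X + alpha • Y + z2 • Z + w2 • W)
    (hWX : lb W X = a • X + b • Y + z3 • Z + (-z1) • W)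
    (hWY : lb W Y = -b • X + a • Y + z4 • Z + (-z2) • W)
    (hYX : lb Y X = r • X + th1 • Z + th2 • W)
    (J : V →ₗ[ℝ] V)
    (hJX : J X = Y) (hJY : J Y = -X) (hJZ : J Z = W) (hJW : J W = -Z)
    (domega : V → V → V → ℝ)
    (hdomega : ∀ U U' T : V, domega U U' T =
      -(inner ℝ (J (lb U U')) T : ℝ) - inner ℝ (J (lb U' T)) U - inner ℝ (J (lb T U)) U') :
    domega X Y Z = -th2 - 2 * alpha ∧
    domega X Y W = th1 - 2 * a ∧
    domega X Z W = 0 ∧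
    domega Y Z W = 0 ∧
    ((∀ U U' T : V, domega U U' T = 0) ↔ (th1 = 2 * a ∧ th2 = -2 * alpha)) := by
  subst hX hY hZ hW
  obtain rfl : domega = fun U U' T => dKahlerForm lb J U U' T := by
    ext U U' T
    exact hdomega U U' T
  have hinner (i j : Fin 4) : ⟪e i, e j⟫ = if i = j then 1 else 0 :=
    orthonormal_iff_ite.mp e.orthonormal i j
  have hXYZ : dKahlerForm lb J (e 0) (e 1) (e 2) = -th2 - 2 * alpha := by
    simp [hskew (e 0), hskew (e 1) (e 2), hYX, hZY, hZX, hJX, hJY, hJZ, hJW,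
      inner_add_left, inner_smul_left, hinner]
    ring
  have hXYW : dKahlerForm lb J (e 0) (e 1) (e 3) = th1 - 2 * a := by
    simp [hskew (e 0), hskew (e 1) (e 3), hYX, hWY, hWX, hJX, hJY, hJZ, hJW, inner_add_left,
      inner_smul_left, hinner]
    ring
  have hXZW : dKahlerForm lb J (e 0) (e 2) (e 3) = 0 := by
    simp [hskew (e 0), hskew (e 2) (e 3), hZX, hWZ, hWX, hJX, hJY, hJZ, hJW, inner_add_left,
      inner_smul_left, hinner]
  have hYZW : dKahlerForm lb J (e 1) (e 2) (e 3) = 0 := by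
    simp [hskew (e 1), hskew (e 2) (e 3), hZY, hWZ, hWY, hJX, hJY, hJZ, hJW, inner_add_left,
      inner_smul_left, hinner]
  refine ⟨hXYZ, hXYW, hXZW, hYZW, fun h => ⟨?_, ?_⟩, ?_⟩
  · linarith [h (e 0) (e 1) (e 3)]
  · linarith [h (e 0) (e 1) (e 2)]
  · rintro ⟨rfl, rfl⟩ U U' T
    have hzero := (dKahlerForm lb J).eq_zero_of_alternating_of_basis_fin_four e.toBasis
      (dKahlerForm_apply_rotate lb J) (dKahlerForm_apply_self_left hskew J)
      (by simp [hXYZ]) (by simp [hXYW]) (by simpa using hXZW) (by simpa using hYZW)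
    simp [hzero]

/-- For the 4-dimensional Lie algebra normal form with orthonormal basis
`{X,Y,Z,W}`, bracket relations as listed, `J` with `JX=Y, JY=−X, JZ=W, JW=−Z` and
Kähler form `ω(U,V)=g(JU,V)`, the exterior derivative
`dω(U,V,T) = −g(J[U,V],T) − g(J[V,T],U) − g(J[T,U],V)` satisfies
`dω(X,Y,Z) = −θ₂−2α`, `dω(X,Y,W) = θ₁−2a`, `dω(X,Z,W) = 0`, `dω(Y,Z,W) = 0`;
hence `dω = 0` iff `θ₁ = 2a` and `θ₂ = −2α`. -/
theorem domega_formulas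
    {V : Type*} [NormedAddCommGroup V] [InnerProductSpace ℝ V] [FiniteDimensional ℝ V]
    (e : OrthonormalBasis (Fin 4) ℝ V)
    (X Y Z W : V) (hX : X = e 0) (hY : Y = e 1) (hZ : Z = e 2) (hW : W = e 3)
    (lam alpha beta a b r z1 z2 z3 z4 w1 w2 th1 th2 : ℝ)
    (lb : V →ₗ[ℝ] V →ₗ[ℝ] V)
    (hskew : ∀ U U' : V, lb U U' = - lb U' U)
    (hWZ : lb W Z = lam • W)
    (hZX : lb Z X = alpha • X + beta • Y + z1 • Z + w1 • W)
    (hZY : lb Z Y = -beta • X + alpha • Y + z2 • Z + w2 • W)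
    (hWX : lb W X = a • X + b • Y + z3 • Z + (-z1) • W)
    (hWY : lb W Y = -b • X + a • Y + z4 • Z + (-z2) • W)
    (hYX : lb Y X = r • X + th1 • Z + th2 • W)
    (J : V →ₗ[ℝ] V)
    (hJX : J X = Y) (hJY : J Y = -X) (hJZ : J Z = W) (hJW : J W = -Z)
    (domega : V → V → V → ℝ)
    (hdomega : ∀ U U' T : V, domega U U' T =
      -(inner ℝ (J (lb U U')) T : ℝ) - inner ℝ (J (lb U' T)) U - inner ℝ (J (lb T U)) U') :
    domega X Y Z = -th2 - 2 * alpha ∧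
    domega X Y W = th1 - 2 * a ∧
    domega X Z W = 0 ∧
    domega Y Z W = 0 ∧
    ((∀ U U' T : V, domega U U' T = 0) ↔ (th1 = 2 * a ∧ th2 = -2 * alpha)) :=
  domega_formulas_general e X Y Z W hX hY hZ hW lam alpha beta a b r z1 z2 z3 z4 w1 w2 th1 th2 lb
    hskew hWZ hZX hZY hWX hWY hYX J hJX hJY hJZ hJW domega hdomega
end

section
/- Let 𝔤 be the 4-dimensional Lie algebra normal form with orthonormal basis {X,Y,Z,W} and brackets [W,Z]=λW, [Z,X]=αX+βY+z₁Z+w₁W, [Z,Y]=−βX+αY+z₂Z+w₂W, [W,X]=aX+bY+z₃Z−z₁W, [W,Y]=−bX+aY+z₄Z−z₂W, [Y,X]=rX+θ₁Z+θ₂W, and J with JX=Y, JY=−X, JZ=W, JW=−Z. Define ∇ by the Koszul formula and ω(U,V)=g(JU,V). Then ∇ω = 0 if and only if θ₁ = 2a, θ₂ = −2α, 2z₂ + z₃ + w₁ = 0 and 2z₁ − z₄ − w₂ = 0. -/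
/-!
Inserting the Koszul formula into `∇_U(ω)(V,T) = g(∇_U V, JT) − g(JV, ∇_U T)` gives
`2 ∇_U(ω)(V,T) = κ(U,V,JT) − κ(U,T,JV)`, where `κ(U,V,T) = 2 g(∇_U V, T)` is the right-hand side
of the Koszul formula. This is trilinear, so `∇ω = 0` amounts to its vanishing on the 64 triples
of basis vectors. From the bracket table,
`2 ∇_X(ω)(X,Z) = 2a − θ₁`, `2 ∇_X(ω)(X,W) = −2α − θ₂`, `2 ∇_Z(ω)(X,Z) = 2z₂ + z₃ + w₁` and
`2 ∇_Z(ω)(X,W) = z₄ + w₂ − 2z₁`, and all other values vanish once these four do.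
-/

open scoped RealInnerProductSpace

theorem LinearMap.forall_apply₃_eq_zero_iff_basis {ι R M N : Type*} [CommSemiring R]
    [AddCommMonoid M] [Module R M] [AddCommMonoid N] [Module R N]
    (b : Module.Basis ι R M) (B : M →ₗ[R] M →ₗ[R] M →ₗ[R] N) :
    (∀ x y z, B x y z = 0) ↔ ∀ i j k, B (b i) (b j) (b k) = 0 := by
  refine ⟨fun h i j k => h _ _ _, fun h => ?_⟩
  have hB : B = 0 := LinearMap.ext_basis b b fun i j => b.ext fun k => h i j k
  simp [hB]

section Koszul

variable {V : Type*} [NormedAddCommGroup V] [InnerProductSpace ℝ V]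

noncomputable def koszulForm (lb : V →ₗ[ℝ] V →ₗ[ℝ] V) : V →ₗ[ℝ] V →ₗ[ℝ] V →ₗ[ℝ] ℝ :=
  LinearMap.mk₂ ℝ
    (fun U U' => (innerₗ V).flip (lb U U') + (innerₗ V).flip U' ∘ₗ lb.flip U +
      innerₗ V U ∘ₗ lb.flip U')
    (fun _ _ _ => by ext; simp [inner_add_right]; ring)
    (fun _ _ _ => by ext; simp)
    (fun _ _ _ => by ext; simp [inner_add_right]; ring)
    (fun _ _ _ => by ext; simp)

theorem koszulForm_apply (lb : V →ₗ[ℝ] V →ₗ[ℝ] V) (U U' T : V) :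
    koszulForm lb U U' T = ⟪T, lb U U'⟫ + ⟪lb T U, U'⟫ + ⟪U, lb T U'⟫ :=
  rfl

noncomputable def twoNablaOmega (lb : V →ₗ[ℝ] V →ₗ[ℝ] V) (J : V →ₗ[ℝ] V) :
    V →ₗ[ℝ] V →ₗ[ℝ] V →ₗ[ℝ] ℝ :=
  LinearMap.mk₂ ℝ (fun U U' => koszulForm lb U U' ∘ₗ J - (koszulForm lb U).flip (J U'))
    (fun _ _ _ => by ext; simp; ring)
    (fun _ _ _ => by ext; simp; ring)
    (fun _ _ _ => by ext; simp; ring)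
    (fun _ _ _ => by ext; simp; ring)

theorem twoNablaOmega_apply (lb : V →ₗ[ℝ] V →ₗ[ℝ] V) (J : V →ₗ[ℝ] V) (U U' T : V) :
    twoNablaOmega lb J U U' T = koszulForm lb U U' (J T) - koszulForm lb U T (J U') :=
  rfl

theorem two_mul_eq_twoNablaOmega {lb : V →ₗ[ℝ] V →ₗ[ℝ] V} {J : V →ₗ[ℝ] V} {nabla : V → V → V}
    {nablaOmega : V → V → V → ℝ}
    (hKoszul : ∀ U U' T : V, 2 * ⟪nabla U U', T⟫ = ⟪T, lb U U'⟫ + ⟪lb T U, U'⟫ + ⟪U, lb T U'⟫)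
    (hnablaOmega : ∀ U U' T : V, nablaOmega U U' T = ⟪nabla U U', J T⟫ - ⟪J U', nabla U T⟫)
    (U U' T : V) : 2 * nablaOmega U U' T = twoNablaOmega lb J U U' T := by
  rw [hnablaOmega, mul_sub, real_inner_comm (nabla U T), hKoszul, hKoszul, twoNablaOmega_apply,
    koszulForm_apply, koszulForm_apply]

end Koszul

theorem kaehler_condition_general
    {V : Type*} [NormedAddCommGroup V] [InnerProductSpace ℝ V]
    (e : OrthonormalBasis (Fin 4) ℝ V)
    (X Y Z W : V) (hX : X = e 0) (hY : Y = e 1) (hZ : Z = e 2) (hW : W = e 3)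
    (lam alpha beta a b r z1 z2 z3 z4 w1 w2 th1 th2 : ℝ)
    (lb : V →ₗ[ℝ] V →ₗ[ℝ] V)
    (hskew : ∀ U U' : V, lb U U' = - lb U' U)
    (hWZ : lb W Z = lam • W)
    (hZX : lb Z X = alpha • X + beta • Y + z1 • Z + w1 • W)
    (hZY : lb Z Y = -beta • X + alpha • Y + z2 • Z + w2 • W)
    (hWX : lb W X = a • X + b • Y + z3 • Z + (-z1) • W)
    (hWY : lb W Y = -b • X + a • Y + z4 • Z + (-z2) • W)
    (hYX : lb Y X = r • X + th1 • Z + th2 • W)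
    (J : V →ₗ[ℝ] V)
    (hJX : J X = Y) (hJY : J Y = -X) (hJZ : J Z = W) (hJW : J W = -Z)
    (nabla : V → V → V)
    (hKoszul : ∀ U U' T : V, 2 * (inner ℝ (nabla U U') T : ℝ) =
      (inner ℝ T (lb U U') : ℝ) + inner ℝ (lb T U) U' + inner ℝ U (lb T U'))
    (nablaOmega : V → V → V → ℝ)
    (hnablaOmega : ∀ U U' T : V, nablaOmega U U' T =
      (inner ℝ (nabla U U') (J T) : ℝ) - inner ℝ (J U') (nabla U T)) :
    (∀ U U' T : V, nablaOmega U U' T = 0) ↔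
      (th1 = 2 * a ∧ th2 = -2 * alpha ∧
        2 * z2 + z3 + w1 = 0 ∧ 2 * z1 - z4 - w2 = 0) := by
  subst hX hY hZ hW
  have hvanish (U U' T : V) : nablaOmega U U' T = 0 ↔ twoNablaOmega lb J U U' T = 0 := by
    rw [← two_mul_eq_twoNablaOmega hKoszul hnablaOmega, mul_eq_zero, or_iff_right two_ne_zero]
  simp_rw [hvanish, LinearMap.forall_apply₃_eq_zero_iff_basis e.toBasis,
    OrthonormalBasis.coe_toBasis]
  have hself (u : V) : lb u u = 0 := by
    simpa [eq_neg_iff_add_eq_zero, ← two_smul ℝ] using hskew u u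
  have hZW : lb (e 2) (e 3) = -(lam • e 3) := by rw [hskew, hWZ]
  have hXZ : lb (e 0) (e 2) = -(alpha • e 0 + beta • e 1 + z1 • e 2 + w1 • e 3) := by
    rw [hskew, hZX]
  have hYZ : lb (e 1) (e 2) = -(-beta • e 0 + alpha • e 1 + z2 • e 2 + w2 • e 3) := by
    rw [hskew, hZY]
  have hXW : lb (e 0) (e 3) = -(a • e 0 + b • e 1 + z3 • e 2 + (-z1) • e 3) := by
    rw [hskew, hWX]
  have hYW : lb (e 1) (e 3) = -(-b • e 0 + a • e 1 + z4 • e 2 + (-z2) • e 3) := by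
    rw [hskew, hWY]
  have hXY : lb (e 0) (e 1) = -(r • e 0 + th1 • e 2 + th2 • e 3) := by rw [hskew, hYX]
  constructor
  · intro h
    have hXXZ := h 0 0 2
    have hXXW := h 0 0 3
    have hZXZ := h 2 0 2
    have hZXW := h 2 0 3
    simp only [twoNablaOmega_apply, koszulForm_apply, map_neg, hJX, hJZ, hJW,
      hself, hZW, hXZ, hYZ, hXW, hYW, hWZ, hZX, hWX, hYX,
      inner_add_left, inner_add_right, inner_neg_left, inner_neg_right, inner_zero_left,
      inner_zero_right, real_inner_smul_left, real_inner_smul_right, e.inner_eq_ite,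
      Fin.reduceEq, Fin.isValue, if_true, if_false] at hXXZ hXXW hZXZ hZXW
    refine ⟨by linarith, by linarith, by linarith, by linarith⟩
  · rintro ⟨h1, h2, h3, h4⟩ i j k
    fin_cases i <;> fin_cases j <;> fin_cases k <;>
    simp only [twoNablaOmega_apply, koszulForm_apply, map_neg, hJX, hJY, hJZ, hJW,
      hself, hZW, hXZ, hYZ, hXW, hYW, hXY, hWZ, hZX, hZY, hWX, hWY, hYX,
      inner_add_left, inner_add_right, inner_neg_left, inner_neg_right, inner_zero_left,
      inner_zero_right, real_inner_smul_left, real_inner_smul_right, e.inner_eq_ite,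
      Fin.reduceEq, Fin.isValue, if_true, if_false, Fin.zero_eta, Fin.mk_one, Fin.reduceFinMk] <;>
    linarith

/-- For the 4-dimensional Lie algebra normal form with orthonormal basis
`{X,Y,Z,W}`, bracket relations as listed, `J` with `JX=Y, JY=−X, JZ=W, JW=−Z`,
Levi-Civita connection `∇` given by the Koszul formula and Kähler form `ω(U,V)=g(JU,V)`
with `∇_U(ω)(V,T) = g(∇_U V, JT) − g(JV, ∇_U T)`, one has `∇ω = 0` iff
`θ₁ = 2a`, `θ₂ = −2α`, `2z₂+z₃+w₁ = 0` and `2z₁−z₄−w₂ = 0`. -/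
theorem kaehler_condition
    {V : Type*} [NormedAddCommGroup V] [InnerProductSpace ℝ V] [FiniteDimensional ℝ V]
    (e : OrthonormalBasis (Fin 4) ℝ V)
    (X Y Z W : V) (hX : X = e 0) (hY : Y = e 1) (hZ : Z = e 2) (hW : W = e 3)
    (lam alpha beta a b r z1 z2 z3 z4 w1 w2 th1 th2 : ℝ)
    (lb : V →ₗ[ℝ] V →ₗ[ℝ] V)
    (hskew : ∀ U U' : V, lb U U' = - lb U' U)
    (hWZ : lb W Z = lam • W)
    (hZX : lb Z X = alpha • X + beta • Y + z1 • Z + w1 • W)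
    (hZY : lb Z Y = -beta • X + alpha • Y + z2 • Z + w2 • W)
    (hWX : lb W X = a • X + b • Y + z3 • Z + (-z1) • W)
    (hWY : lb W Y = -b • X + a • Y + z4 • Z + (-z2) • W)
    (hYX : lb Y X = r • X + th1 • Z + th2 • W)
    (J : V →ₗ[ℝ] V)
    (hJX : J X = Y) (hJY : J Y = -X) (hJZ : J Z = W) (hJW : J W = -Z)
    (nabla : V → V → V)
    (hKoszul : ∀ U U' T : V, 2 * (inner ℝ (nabla U U') T : ℝ) =
      (inner ℝ T (lb U U') : ℝ) + inner ℝ (lb T U) U' + inner ℝ U (lb T U'))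
    (nablaOmega : V → V → V → ℝ)
    (hnablaOmega : ∀ U U' T : V, nablaOmega U U' T =
      (inner ℝ (nabla U U') (J T) : ℝ) - inner ℝ (J U') (nabla U T)) :
    (∀ U U' T : V, nablaOmega U U' T = 0) ↔
      (th1 = 2 * a ∧ th2 = -2 * alpha ∧
        2 * z2 + z3 + w1 = 0 ∧ 2 * z1 - z4 - w2 = 0) :=
  kaehler_condition_general e X Y Z W hX hY hZ hW lam alpha beta a b r z1 z2 z3 z4 w1 w2 th1 th2 lb
    hskew hWZ hZX hZY hWX hWY hYX J hJX hJY hJZ hJW nabla hKoszul nablaOmega hnablaOmega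
end
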